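/- arXiv:2403.10537 — 2 statements merged into one kernel-verified Lean document; each statement's English description precedes it below -/
import Mathlib

section
/- Let S* be an optimal solution to a maximization problem over a finite feasible set with objective OBJ(S) = ∑_{m} v_{S(m)}, and let Ŝ be an optimal solution to the same problem with values replaced by v̂_n = ⌊v_n/θ⌋ where θ = ε·v_max/M, v_max is the maximum item value appearing in S*, ε ∈ (0,1], and M is the number of types (so every feasible solution selects exactly M items). If all items with value exceeding v_max are excluded and S* remains feasible for the rounded instance, then OBJ(Ŝ) ≥ (1−ε)·OBJ(S*). -/
open Finset

/-- FPTAS approximation guarantee.  `Feas` is the finite feasible set of selections (one item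
per each of the `M` types), `v` gives nonnegative item values, `Sstar` is optimal for the true
objective, `vmax` is the maximum item value appearing in `Sstar`, `θ = ε * vmax / M`, the
restricted instance excludes items of value exceeding `vmax` (so its feasible set is
`{S ∈ Feas | ∀ m, v (S m) ≤ vmax}`, which still contains `Sstar`), and `Shat` is optimal on the
restricted instance for the rounded values `⌊v n / θ⌋`.  Then
`OBJ(Shat) ≥ (1 - ε) * OBJ(Sstar)`. -/
theorem stmt2 {ι : Type*} (M : ℕ) (hM : 1 ≤ M) (v : ι → ℝ) (hv : ∀ n, 0 ≤ v n)
    (Feas : Set (Fin M → ι)) (hfin : Feas.Finite)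
    (ε : ℝ) (hε : ε ∈ Set.Ioc (0 : ℝ) 1)
    (Sstar : Fin M → ι) (hSstar : Sstar ∈ Feas)
    (hopt : ∀ S ∈ Feas, ∑ m, v (S m) ≤ ∑ m, v (Sstar m))
    (vmax : ℝ) (hvmax₁ : ∀ m, v (Sstar m) ≤ vmax) (hvmax₂ : ∃ m, v (Sstar m) = vmax)
    (θ : ℝ) (hθ : θ = ε * vmax / M)
    (hSstar' : Sstar ∈ {S ∈ Feas | ∀ m, v (S m) ≤ vmax})
    (Shat : Fin M → ι) (hShat : Shat ∈ {S ∈ Feas | ∀ m, v (S m) ≤ vmax})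
    (hhatopt : ∀ S ∈ {S ∈ Feas | ∀ m, v (S m) ≤ vmax},
      ∑ m, (⌊v (S m) / θ⌋ : ℝ) ≤ ∑ m, (⌊v (Shat m) / θ⌋ : ℝ)) :
    (1 - ε) * ∑ m, v (Sstar m) ≤ ∑ m, v (Shat m) := by
  obtain ⟨hε0, hε1⟩ := hε
  obtain ⟨m₀, hm₀⟩ := hvmax₂
  have hvmax0 : 0 ≤ vmax := hm₀ ▸ hv _
  rcases eq_or_lt_of_le hvmax0 with h0 | hpos
  · -- vmax = 0: all values in Sstar are 0
    have hsum0 : ∑ m, v (Sstar m) = 0 := by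
      apply Finset.sum_eq_zero
      intro m _
      exact le_antisymm ((hvmax₁ m).trans h0.ge) (hv _)
    rw [hsum0, mul_zero]
    exact Finset.sum_nonneg fun m _ => hv _
  · have hθpos : 0 < θ := by
      rw [hθ]
      positivity
    have key : ∀ x : ℝ, θ * ⌊x / θ⌋ ≤ x := fun x => by
      calc θ * ⌊x / θ⌋ ≤ θ * (x / θ) :=
        mul_le_mul_of_nonneg_left (Int.floor_le _) hθpos.le
      _ = x := by field_simp
    have key2 : ∀ x : ℝ, x - θ ≤ θ * ⌊x / θ⌋ := fun x => by
      have h := mul_lt_mul_of_pos_left (Int.sub_one_lt_floor (x / θ)) hθpos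
      have hx : θ * (x / θ) = x := by field_simp
      rw [mul_sub, mul_one, hx] at h
      linarith
    have hvmax_le : vmax ≤ ∑ m, v (Sstar m) := by
      rw [← hm₀]
      exact Finset.single_le_sum (fun m _ => hv _) (Finset.mem_univ m₀)
    have h1 : ∑ m, v (Shat m) ≥ θ * ∑ m, (⌊v (Shat m) / θ⌋ : ℝ) := by
      rw [Finset.mul_sum]
      exact Finset.sum_le_sum fun m _ => key _
    have h2 : θ * ∑ m, (⌊v (Sstar m) / θ⌋ : ℝ) ≤ θ * ∑ m, (⌊v (Shat m) / θ⌋ : ℝ) :=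
      mul_le_mul_of_nonneg_left (hhatopt _ hSstar') hθpos.le
    have h3 : ∑ m, v (Sstar m) - M * θ ≤ θ * ∑ m, (⌊v (Sstar m) / θ⌋ : ℝ) := by
      rw [Finset.mul_sum]
      calc ∑ m, v (Sstar m) - M * θ = ∑ m : Fin M, (v (Sstar m) - θ) := by
            rw [Finset.sum_sub_distrib, Finset.sum_const, Finset.card_univ,
              Fintype.card_fin, nsmul_eq_mul]
        _ ≤ ∑ m, θ * (⌊v (Sstar m) / θ⌋ : ℝ) := Finset.sum_le_sum fun m _ => key2 _
    have hMθ : (M : ℝ) * θ = ε * vmax := by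
      rw [hθ]
      have hM' : (0 : ℝ) < M := by exact_mod_cast hM
      field_simp
    nlinarith
end

section
/- If ε ∈ (0,1] and the FPTAS enumerates every item value as a candidate for v_max, then in the iteration where the candidate equals the true maximum item value of an optimal solution S*, the solution S* remains feasible for the restricted instance (no item of S* is excluded), and therefore the returned best solution over all iterations achieves objective value at least (1−ε) times the optimum. -/
open Finset

/-- FPTAS enumeration of `v_max`: in the iteration where the candidate `vmax` equals the true
maximum item value of an optimal solution `Sstar`, no item of `Sstar` is excluded, so `Sstar`
remains feasible for the restricted instance `{S ∈ Feas | ∀ m, v (S m) ≤ vmax}`; consequently,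
for `Shat` optimal on the restricted instance for the rounded values `⌊v n / θ⌋` with
`θ = ε * vmax / M`, the best solution returned over all iterations (any `best ∈ Feas` whose
original value is at least that of `Shat`) achieves at least `(1 - ε)` times the optimum. -/
theorem stmt14 {ι : Type*} (M : ℕ) (hM : 1 ≤ M) (v : ι → ℝ) (hv : ∀ n, 0 ≤ v n)
    (Feas : Set (Fin M → ι)) (hfin : Feas.Finite)
    (ε : ℝ) (hε : ε ∈ Set.Ioc (0 : ℝ) 1)
    (Sstar : Fin M → ι) (hSstar : Sstar ∈ Feas)
    (hopt : ∀ S ∈ Feas, ∑ m, v (S m) ≤ ∑ m, v (Sstar m))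
    (vmax : ℝ) (hvmax₁ : ∀ m, v (Sstar m) ≤ vmax) (hvmax₂ : ∃ m, v (Sstar m) = vmax)
    (θ : ℝ) (hθ : θ = ε * vmax / M) :
    Sstar ∈ {S ∈ Feas | ∀ m, v (S m) ≤ vmax} ∧
    ∀ Shat ∈ {S ∈ Feas | ∀ m, v (S m) ≤ vmax},
      (∀ S ∈ {S ∈ Feas | ∀ m, v (S m) ≤ vmax},
        ∑ m, (⌊v (S m) / θ⌋ : ℝ) ≤ ∑ m, (⌊v (Shat m) / θ⌋ : ℝ)) →
      ∀ best ∈ Feas, (∑ m, v (Shat m)) ≤ (∑ m, v (best m)) →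
        (1 - ε) * ∑ m, v (Sstar m) ≤ ∑ m, v (best m) := by
  obtain ⟨hε0, hε1⟩ := hε
  obtain ⟨m₀, hm₀⟩ := hvmax₂
  have hvmax0 : 0 ≤ vmax := hm₀ ▸ hv _
  refine ⟨⟨hSstar, hvmax₁⟩, ?_⟩
  rintro Shat ⟨hShatF, hShatB⟩ hShatOpt best hbest hbest2
  rcases eq_or_lt_of_le hvmax0 with hzero | hpos
  · -- vmax = 0 : optimum is 0
    have : ∑ m, v (Sstar m) ≤ 0 := by
      apply Finset.sum_nonpos
      intro m _
      exact (hvmax₁ m).trans hzero.ge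
    have h2 : (0:ℝ) ≤ ∑ m, v (best m) := Finset.sum_nonneg fun m _ => hv _
    nlinarith
  · have hθpos : 0 < θ := by
      rw [hθ]
      positivity
    -- vmax ≤ opt
    have hvle : vmax ≤ ∑ m, v (Sstar m) := by
      rw [← hm₀]
      exact Finset.single_le_sum (fun m _ => hv _) (Finset.mem_univ m₀)
    -- sum v(Shat) ≥ θ * sum ⌊v(Shat)/θ⌋ ≥ θ * sum ⌊v(Sstar)/θ⌋ ≥ opt - M θ
    have key := hShatOpt Sstar ⟨hSstar, hvmax₁⟩
    have h1 : ∑ m, v (Sstar m) - M * θ ≤ θ * ∑ m, (⌊v (Sstar m) / θ⌋ : ℝ) := by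
      rw [Finset.mul_sum]
      have : ∑ m, v (Sstar m) - M * θ = ∑ m : Fin M, (v (Sstar m) - θ) := by
        rw [Finset.sum_sub_distrib, Finset.sum_const, Finset.card_univ, Fintype.card_fin,
          nsmul_eq_mul]
      rw [this]
      apply Finset.sum_le_sum
      intro m _
      have hfl := Int.sub_one_lt_floor (v (Sstar m) / θ)
      have hfl2 : θ * (v (Sstar m) / θ - 1) ≤ θ * (⌊v (Sstar m) / θ⌋ : ℝ) :=
        mul_le_mul_of_nonneg_left hfl.le hθpos.le
      have : θ * (v (Sstar m) / θ) = v (Sstar m) := by field_simp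
      nlinarith
    have h2 : θ * ∑ m, (⌊v (Shat m) / θ⌋ : ℝ) ≤ ∑ m, v (Shat m) := by
      rw [Finset.mul_sum]
      apply Finset.sum_le_sum
      intro m _
      have := Int.floor_le (v (Shat m) / θ)
      calc θ * (⌊v (Shat m) / θ⌋ : ℝ) ≤ θ * (v (Shat m) / θ) := by
            exact mul_le_mul_of_nonneg_left this hθpos.le
        _ = v (Shat m) := by field_simp
    have h3 : θ * ∑ m, (⌊v (Sstar m) / θ⌋ : ℝ) ≤ θ * ∑ m, (⌊v (Shat m) / θ⌋ : ℝ) :=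
      mul_le_mul_of_nonneg_left key hθpos.le
    have hMθ : (M : ℝ) * θ = ε * vmax := by
      rw [hθ]
      field_simp
    have hchain : ∑ m, v (Sstar m) - ε * vmax ≤ ∑ m, v (best m) := by
      rw [← hMθ]; linarith
    nlinarith
end
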